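/- arXiv:1508.00701 — 4 statements merged into one kernel-verified Lean document; each statement's English description precedes it below -/
import Mathlib

section
/- The kernel-based autoconvolution operator F : X → Y is Fréchet differentiable at every f ∈ X, and its Fréchet derivative F'(f) : X → Y is the bounded linear operator given by [F'(f)h](s) = 2 ∫_{max(s−1,0)}^{min(s,1)} k(s,τ) f(s−τ) h(τ) dτ for 0 ≤ s ≤ 2 and h ∈ X. -/
open MeasureTheory Complex Set Filter Topology
open scoped ENNReal

noncomputable section

/-- Lebesgue measure restricted to `(0,1)`. -/
abbrev μ1 : Measure ℝ := volume.restrict (Set.Ioo (0:ℝ) 1)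
/-- Lebesgue measure restricted to `(0,2)`. -/
abbrev μ2 : Measure ℝ := volume.restrict (Set.Ioo (0:ℝ) 2)
/-- `X = L²_ℂ(0,1)`. -/
abbrev X : Type := Lp ℂ 2 μ1
/-- `Y = L²_ℂ(0,2)`. -/
abbrev Y : Type := Lp ℂ 2 μ2
/-- The parallelogram `𝔓 = {(s,τ) : 0 ≤ τ ≤ 1, τ ≤ s ≤ τ+1}`. -/
def Par : Set (ℝ × ℝ) := {p | 0 ≤ p.2 ∧ p.2 ≤ 1 ∧ p.2 ≤ p.1 ∧ p.1 ≤ p.2 + 1}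

/-- Weak (sequential) convergence of a sequence in a complex inner product space. -/
def WConv {E : Type*} [NormedAddCommGroup E] [InnerProductSpace ℂ E]
    (u : ℕ → E) (x : E) : Prop :=
  ∀ g : E, Tendsto (fun n => (inner ℂ (u n) g : ℂ)) atTop (𝓝 (inner ℂ x g))

/-!
Expanding the quadratic form, `F (f + h) - F f - F'(f) h` is the kernel autoconvolution of `h`
with itself: the substitution `τ ↦ s - τ` together with `k (s, τ) = k (s, s - τ)` makes the two
cross terms equal. Since `k` is bounded by some `M` on the compact set `Par`, the AM–GM inequality
`|h (s - τ)| |h τ| ≤ (|h (s - τ)|² + |h τ|²) / 2` gives `|∫ k (s, τ) h (s - τ) h τ dτ| ≤ M ‖h‖²`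
for every `s`, so the remainder is `O(‖h‖²)` in `Y`.
-/

open Asymptotics

theorem hasFDerivAt_of_norm_sub_le_sq {𝕜 E G : Type*} [NontriviallyNormedField 𝕜]
    [NormedAddCommGroup E] [NormedSpace 𝕜 E] [NormedAddCommGroup G] [NormedSpace 𝕜 G]
    {f : E → G} {f' : E →L[𝕜] G} {x : E} {C : ℝ}
    (hf : ∀ h, ‖f (x + h) - f x - f' h‖ ≤ C * ‖h‖ ^ 2) : HasFDerivAt f f' x := by
  rw [hasFDerivAt_iff_isLittleO_nhds_zero]
  refine (IsBigO.of_bound C (Eventually.of_forall fun h => ?_)).trans_isLittleO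
    (isLittleO_norm_pow_id one_lt_two)
  rw [Real.norm_of_nonneg (by positivity)]
  exact hf h

theorem integral_norm_sq_eq_norm_sq {α E : Type*} [MeasurableSpace α] {μ : Measure α}
    [NormedAddCommGroup E] (g : Lp E 2 μ) : ∫ x, ‖g x‖ ^ 2 ∂μ = ‖g‖ ^ 2 := by
  rw [Lp.norm_def, (Lp.memLp g).eLpNorm_eq_integral_rpow_norm two_ne_zero ENNReal.ofNat_ne_top,
    ENNReal.toReal_ofReal (by positivity), ENNReal.toReal_ofNat,
    ← Real.rpow_natCast _ 2, ← Real.rpow_mul (integral_nonneg fun _ => by positivity)]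
  norm_num

theorem mem_Par_iff {s τ : ℝ} : (s, τ) ∈ Par ↔ τ ∈ Icc (max (s - 1) 0) (min s 1) := by
  simp only [Par, mem_ofPred_eq, mem_Icc, max_le_iff, le_min_iff]
  constructor
  · rintro ⟨h₀, h₁, hs, hs'⟩
    exact ⟨⟨by linarith, h₀⟩, hs, h₁⟩
  · rintro ⟨⟨hs', h₀⟩, hs, h₁⟩
    exact ⟨h₀, h₁, hs, by linarith⟩

theorem sub_mem_Par_iff {s τ : ℝ} : (s, s - τ) ∈ Par ↔ (s, τ) ∈ Par := by
  simp only [Par, mem_ofPred_eq]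
  constructor <;> rintro ⟨_, _, _, _⟩ <;> refine ⟨?_, ?_, ?_, ?_⟩ <;> linarith

theorem mem_Icc_of_mem_Par {s τ : ℝ} (h : (s, τ) ∈ Par) :
    τ ∈ Icc (0 : ℝ) 1 ∧ s - τ ∈ Icc (0 : ℝ) 1 := by
  obtain ⟨h₀, h₁, hs, hs'⟩ := h
  exact ⟨⟨h₀, h₁⟩, by linarith, by linarith⟩

theorem isClosed_Par : IsClosed Par :=
  (isClosed_le continuous_const continuous_snd).inter <|
    (isClosed_le continuous_snd continuous_const).inter <|
      (isClosed_le continuous_snd continuous_fst).inter <|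
        isClosed_le continuous_fst (continuous_snd.add continuous_const)

theorem isCompact_Par : IsCompact Par := by
  refine (isCompact_Icc (a := ((0 : ℝ), (0 : ℝ))) (b := (2, 1))).of_isClosed_subset isClosed_Par ?_
  rintro p ⟨h₀, h₁, hs, hs'⟩
  exact ⟨⟨by linarith, h₀⟩, by linarith, h₁⟩

/-- On `(0, 2)`, `F f = kerConv k f f` and `F'(f) h = 2 * kerConv k f h`: as `k` vanishes off
`Par`, integrating over all of `ℝ` gives the paper's integral over `[max (s - 1) 0, min s 1]`. -/
def kerConv (k : ℝ × ℝ → ℂ) (g₁ g₂ : ℝ → ℂ) (s : ℝ) : ℂ :=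
  ∫ τ, k (s, τ) * g₁ (s - τ) * g₂ τ

section Kernel

variable {k : ℝ × ℝ → ℂ}

theorem measurable_of_continuousOn_Par (hk_cont : ContinuousOn k Par)
    (hk_supp : ∀ p, p ∉ Par → k p = 0) : Measurable k := by
  classical
  have hk : Par.piecewise k 0 = k := by
    ext p
    by_cases hp : p ∈ Par <;> simp [hp, hk_supp]
  rw [← hk]
  exact hk_cont.measurable_piecewise continuousOn_const isClosed_Par.measurableSet

theorem exists_norm_le_of_continuousOn_Par (hk_cont : ContinuousOn k Par)
    (hk_supp : ∀ p, p ∉ Par → k p = 0) : ∃ M, ∀ p, ‖k p‖ ≤ M := by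
  obtain ⟨M, hM⟩ := isCompact_Par.exists_bound_of_continuousOn hk_cont
  refine ⟨max M 0, fun p => ?_⟩
  by_cases hp : p ∈ Par
  · exact (hM p hp).trans (le_max_left _ _)
  · simp [hk_supp p hp]

theorem apply_sub_eq_of_symm (hk_supp : ∀ p, p ∉ Par → k p = 0)
    (hk_symm : ∀ p ∈ Par, k p = k (p.1, p.1 - p.2)) (s τ : ℝ) : k (s, s - τ) = k (s, τ) := by
  by_cases hp : (s, τ) ∈ Par
  · exact (hk_symm _ hp).symm
  · rw [hk_supp _ hp, hk_supp _ (sub_mem_Par_iff.not.mpr hp)]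

theorem intervalIntegral_eq_kerConv (hk_supp : ∀ p, p ∉ Par → k p = 0) {s : ℝ}
    (hs : s ∈ Icc (0 : ℝ) 2) (g₁ g₂ : ℝ → ℂ) :
    ∫ τ in (max (s - 1) 0)..(min s 1), k (s, τ) * g₁ (s - τ) * g₂ τ = kerConv k g₁ g₂ s := by
  have hab : max (s - 1) 0 ≤ min s 1 := by
    simp only [max_le_iff, le_min_iff]
    refine ⟨⟨?_, ?_⟩, ?_, ?_⟩ <;> linarith [hs.1, hs.2]
  rw [intervalIntegral.integral_of_le hab, ← integral_Icc_eq_integral_Ioc]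
  refine setIntegral_eq_integral_of_forall_compl_eq_zero fun τ hτ => ?_
  rw [hk_supp _ (mem_Par_iff.not.mpr hτ), zero_mul, zero_mul]

theorem kerConv_comm (hk_supp : ∀ p, p ∉ Par → k p = 0)
    (hk_symm : ∀ p ∈ Par, k p = k (p.1, p.1 - p.2)) (g₁ g₂ : ℝ → ℂ) (s : ℝ) :
    kerConv k g₁ g₂ s = kerConv k g₂ g₁ s := by
  rw [kerConv, ← integral_sub_left_eq_self _ volume s, kerConv]
  simp only [sub_sub_cancel, apply_sub_eq_of_symm hk_supp hk_symm]
  congr 1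
  ext τ
  ring

theorem kerConv_congr_ae (hk_supp : ∀ p, p ∉ Par → k p = 0) {g₁ g₁' g₂ g₂' : ℝ → ℂ}
    (h₁ : g₁ =ᵐ[μ1] g₁') (h₂ : g₂ =ᵐ[μ1] g₂') (s : ℝ) :
    kerConv k g₁ g₂ s = kerConv k g₁' g₂' s := by
  have on_Icc {g g' : ℝ → ℂ} (h : g =ᵐ[μ1] g') : ∀ᵐ t, t ∈ Icc (0 : ℝ) 1 → g t = g' t := by
    rw [μ1, Measure.restrict_congr_set Ioo_ae_eq_Icc] at h
    exact (ae_restrict_iff' measurableSet_Icc).mp h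
  have h₁' : ∀ᵐ τ, s - τ ∈ Icc (0 : ℝ) 1 → g₁ (s - τ) = g₁' (s - τ) :=
    (Measure.measurePreserving_sub_left volume s).quasiMeasurePreserving.ae (on_Icc h₁)
  refine integral_congr_ae ?_
  filter_upwards [h₁', on_Icc h₂] with τ e₁ e₂
  by_cases hp : (s, τ) ∈ Par
  · obtain ⟨hτ, hsτ⟩ := mem_Icc_of_mem_Par hp
    rw [e₁ hsτ, e₂ hτ]
  · simp [hk_supp _ hp]

theorem norm_kerConv_integrand_le (hk_supp : ∀ p, p ∉ Par → k p = 0) {M : ℝ}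
    (hM : ∀ p, ‖k p‖ ≤ M) (g₁ g₂ : ℝ → ℂ) (s τ : ℝ) :
    ‖k (s, τ) * g₁ (s - τ) * g₂ τ‖ ≤ M / 2 *
      ((Icc 0 1).indicator (fun t => ‖g₁ t‖ ^ 2) (s - τ) +
        (Icc 0 1).indicator (fun t => ‖g₂ t‖ ^ 2) τ) := by
  have hM0 : 0 ≤ M := (norm_nonneg _).trans (hM 0)
  by_cases hp : (s, τ) ∈ Par
  · obtain ⟨hτ, hsτ⟩ := mem_Icc_of_mem_Par hp
    rw [indicator_of_mem hsτ, indicator_of_mem hτ, norm_mul, norm_mul, mul_assoc]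
    have amgm : ‖g₁ (s - τ)‖ * ‖g₂ τ‖ ≤ (‖g₁ (s - τ)‖ ^ 2 + ‖g₂ τ‖ ^ 2) / 2 := by
      nlinarith [sq_nonneg (‖g₁ (s - τ)‖ - ‖g₂ τ‖)]
    calc ‖k (s, τ)‖ * (‖g₁ (s - τ)‖ * ‖g₂ τ‖) ≤ M * ((‖g₁ (s - τ)‖ ^ 2 + ‖g₂ τ‖ ^ 2) / 2) :=
          mul_le_mul (hM _) amgm (by positivity) hM0
      _ = _ := by ring
  · rw [hk_supp _ hp, zero_mul, zero_mul, norm_zero]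
    exact mul_nonneg (by positivity) (add_nonneg (indicator_nonneg (fun _ _ => by positivity) _)
      (indicator_nonneg (fun _ _ => by positivity) _))

theorem integrable_kerConv_integrand (hk_cont : ContinuousOn k Par)
    (hk_supp : ∀ p, p ∉ Par → k p = 0) {g₁ g₂ : ℝ → ℂ}
    (hg₁m : StronglyMeasurable g₁) (hg₂m : StronglyMeasurable g₂)
    (hg₁ : IntegrableOn (fun t => ‖g₁ t‖ ^ 2) (Icc 0 1))
    (hg₂ : IntegrableOn (fun t => ‖g₂ t‖ ^ 2) (Icc 0 1)) (s : ℝ) :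
    Integrable fun τ => k (s, τ) * g₁ (s - τ) * g₂ τ := by
  obtain ⟨M, hM⟩ := exists_norm_le_of_continuousOn_Par hk_cont hk_supp
  have hmeas : AEStronglyMeasurable (fun τ => k (s, τ) * g₁ (s - τ) * g₂ τ) :=
    ((((measurable_of_continuousOn_Par hk_cont hk_supp).comp measurable_prodMk_left
      ).aestronglyMeasurable.mul (hg₁m.comp_measurable (measurable_const_sub s)
      ).aestronglyMeasurable).mul hg₂m.aestronglyMeasurable)
  have hdom := ((((integrable_indicator_iff measurableSet_Icc).mpr hg₁).comp_sub_left s).add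
    ((integrable_indicator_iff measurableSet_Icc).mpr hg₂)).const_mul (M / 2)
  exact hdom.mono' hmeas (Eventually.of_forall (norm_kerConv_integrand_le hk_supp hM g₁ g₂ s))

theorem norm_kerConv_self_le (hk_supp : ∀ p, p ∉ Par → k p = 0) {M : ℝ}
    (hM : ∀ p, ‖k p‖ ≤ M) {g : ℝ → ℂ} (hg : IntegrableOn (fun t => ‖g t‖ ^ 2) (Icc 0 1))
    (s : ℝ) : ‖kerConv k g g s‖ ≤ M * ∫ t in Icc 0 1, ‖g t‖ ^ 2 := by
  set G := (Icc (0 : ℝ) 1).indicator fun t => ‖g t‖ ^ 2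
  have hG : Integrable G := (integrable_indicator_iff measurableSet_Icc).mpr hg
  calc ‖kerConv k g g s‖ ≤ ∫ τ, ‖k (s, τ) * g (s - τ) * g τ‖ := norm_integral_le_integral_norm _
    _ ≤ ∫ τ, M / 2 * (G (s - τ) + G τ) :=
        integral_mono_of_nonneg (Eventually.of_forall fun _ => norm_nonneg _)
          (((hG.comp_sub_left s).add hG).const_mul _)
          (Eventually.of_forall (norm_kerConv_integrand_le hk_supp hM g g s))
    _ = M / 2 * ((∫ τ, G (s - τ)) + ∫ τ, G τ) := by
        rw [integral_const_mul, integral_add (hG.comp_sub_left s) hG]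
    _ = M * ∫ t in Icc 0 1, ‖g t‖ ^ 2 := by
        rw [integral_sub_left_eq_self G volume s, integral_indicator measurableSet_Icc]
        ring

theorem kerConv_add_self (hk_cont : ContinuousOn k Par) (hk_supp : ∀ p, p ∉ Par → k p = 0)
    (hk_symm : ∀ p ∈ Par, k p = k (p.1, p.1 - p.2)) {f h : ℝ → ℂ}
    (hfm : StronglyMeasurable f) (hhm : StronglyMeasurable h)
    (hf : IntegrableOn (fun t => ‖f t‖ ^ 2) (Icc 0 1))
    (hh : IntegrableOn (fun t => ‖h t‖ ^ 2) (Icc 0 1)) (s : ℝ) :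
    kerConv k (f + h) (f + h) s = kerConv k f f s + 2 * kerConv k f h s + kerConv k h h s := by
  have hff := integrable_kerConv_integrand hk_cont hk_supp hfm hfm hf hf s
  have hfh := integrable_kerConv_integrand hk_cont hk_supp hfm hhm hf hh s
  have hhf := integrable_kerConv_integrand hk_cont hk_supp hhm hfm hh hf s
  have hhh := integrable_kerConv_integrand hk_cont hk_supp hhm hhm hh hh s
  have expand : kerConv k (f + h) (f + h) s =
      kerConv k f f s + kerConv k h f s + (kerConv k f h s + kerConv k h h s) := by
    simp only [kerConv, Pi.add_apply, mul_add, add_mul]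
    rw [integral_add (hff.fun_add hhf) (hfh.fun_add hhh), integral_add hff hhf,
      integral_add hfh hhh]
  rw [expand, kerConv_comm hk_supp hk_symm h f]
  ring

end Kernel

theorem integrableOn_norm_sq_Icc (g : X) : IntegrableOn (fun t => ‖g t‖ ^ 2) (Icc 0 1) :=
  (integrableOn_Icc_iff_integrableOn_Ioo).mpr ((Lp.memLp g).integrable_norm_pow two_ne_zero)

theorem integral_norm_sq_Icc (g : X) : ∫ t in Icc 0 1, ‖g t‖ ^ 2 = ‖g‖ ^ 2 := by
  rw [← integral_norm_sq_eq_norm_sq g, integral_Icc_eq_integral_Ioo]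

/-- The kernel-based autoconvolution operator `F : X → Y` is Fréchet
differentiable at every `f ∈ X`, with derivative `F'(f)` given by
`[F'(f)h](s) = 2 ∫ k(s,τ) f(s−τ) h(τ) dτ`. -/
theorem stmt1 (k : ℝ × ℝ → ℂ) (hk_cont : ContinuousOn k Par)
    (hk_supp : ∀ p, p ∉ Par → k p = 0)
    (hk_symm : ∀ p ∈ Par, k p = k (p.1, p.1 - p.2))
    (F : X → Y)
    (hF : ∀ f : X, ∀ᵐ s ∂μ2,
      F f s = ∫ τ in (max (s - 1) 0)..(min s 1), k (s, τ) * f (s - τ) * f τ)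
    (DF : X → (X →L[ℂ] Y))
    (hDF : ∀ f h : X, ∀ᵐ s ∂μ2,
      DF f h s = 2 * ∫ τ in (max (s - 1) 0)..(min s 1), k (s, τ) * f (s - τ) * h τ) :
    ∀ f : X, HasFDerivAt F (DF f) f := by
  intro f
  obtain ⟨M, hM⟩ := exists_norm_le_of_continuousOn_Par hk_cont hk_supp
  have remainder (h : X) : ∀ᵐ s ∂μ2, (F (f + h) - F f - DF f h) s = kerConv k h h s := by
    filter_upwards [hF (f + h), hF f, hDF f h, Lp.coeFn_sub (F (f + h) - F f) (DF f h),
      Lp.coeFn_sub (F (f + h)) (F f), ae_restrict_mem measurableSet_Ioo] with s e₁ e₂ e₃ e₄ e₅ hs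
    rw [e₄, Pi.sub_apply, e₅, Pi.sub_apply, e₁, e₂, e₃]
    simp only [intervalIntegral_eq_kerConv hk_supp (Ioo_subset_Icc_self hs)]
    rw [kerConv_congr_ae hk_supp (Lp.coeFn_add f h) (Lp.coeFn_add f h),
      kerConv_add_self hk_cont hk_supp hk_symm (Lp.stronglyMeasurable f) (Lp.stronglyMeasurable h)
        (integrableOn_norm_sq_Icc f) (integrableOn_norm_sq_Icc h)]
    ring
  refine hasFDerivAt_of_norm_sub_le_sq
    (C := (measureUnivNNReal μ2 : ℝ) ^ (2 : ℝ≥0∞).toReal⁻¹ * M) fun h => ?_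
  rw [mul_assoc]
  refine Lp.norm_le_of_ae_bound (mul_nonneg ((norm_nonneg _).trans (hM 0)) (sq_nonneg _)) ?_
  filter_upwards [remainder h] with s hs
  rw [hs, ← integral_norm_sq_Icc h]
  exact norm_kerConv_self_le hk_supp hM (integrableOn_norm_sq_Icc h) s
end
end

section
/- If the kernel k is not identically zero on 𝔓, then the kernel-based autoconvolution operator F : X → Y is not compact; more precisely, there exists a sequence {h_n} in the closed unit ball of X with h_n ⇀ 0 weakly in X, ‖h_n‖_X not converging to 0, and such that {F(h_n)} has no subsequence converging in norm to 0 in Y (indeed liminf_{n→∞} ‖F(h_n)‖_Y > 0). -/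
/-
Modulation by `𝐞 (n * x) = exp (2πinx)` commutes with the autoconvolution up to the factor
`𝐞 (n * s)`, because `𝐞 (n * (s - τ)) * 𝐞 (n * τ) = 𝐞 (n * s)`. Hence for `h n = 𝐞 (n * ·) * f`
neither `‖h n‖` nor `‖F (h n)‖` depends on `n`, while `h n ⇀ 0` by the Riemann–Lebesgue
lemma. It remains to find `f` in the unit ball with `F f ≠ 0`. If `k (s₀, a) = c ≠ 0`, then by
symmetry also `k (s₀, s₀ - a) = c`; for `f` the indicator of two short intervals near `a` and
`s₀ - a`, `F f s` is, for `s` near `s₀`, the integral over a set of positive measure of values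
of `k` within `‖c‖ / 2` of `c`, hence nonzero.
-/

open MeasureTheory Complex Set Filter Topology
open scoped ENNReal

noncomputable section

open scoped FourierTransform

section Modulation

variable {μ : Measure ℝ} {p : ℝ≥0∞}

lemma memLp_fourierChar_mul (t : ℝ) (f : Lp ℂ p μ) :
    MemLp (fun x => (𝐞 (t * x) : ℂ) * f x) p μ :=
  (Lp.memLp f).of_le
    ((by fun_prop : Continuous fun x => (𝐞 (t * x) : ℂ)).aestronglyMeasurable.mul
      (Lp.aestronglyMeasurable f))
    (Eventually.of_forall fun x => by simp [Circle.norm_coe])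

def modulate (t : ℝ) (f : Lp ℂ p μ) : Lp ℂ p μ := (memLp_fourierChar_mul t f).toLp _

lemma coeFn_modulate (t : ℝ) (f : Lp ℂ p μ) :
    modulate t f =ᵐ[μ] fun x => (𝐞 (t * x) : ℂ) * f x :=
  (memLp_fourierChar_mul t f).coeFn_toLp

lemma MeasureTheory.Lp.norm_eq_of_ae_norm_eq {E F : Type*} [NormedAddCommGroup E]
    [NormedAddCommGroup F] {f : Lp E p μ} {g : Lp F p μ} (h : ∀ᵐ x ∂μ, ‖f x‖ = ‖g x‖) :
    ‖f‖ = ‖g‖ :=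
  (Lp.norm_le_norm_of_ae_le (h.mono fun _ hx => hx.le)).antisymm
    (Lp.norm_le_norm_of_ae_le (h.mono fun _ hx => hx.ge))

lemma norm_modulate (t : ℝ) (f : Lp ℂ p μ) : ‖modulate t f‖ = ‖f‖ :=
  Lp.norm_eq_of_ae_norm_eq <| (coeFn_modulate t f).mono fun x hx => by
    simp [hx, Circle.norm_coe]

end Modulation

lemma wConv_modulate {s : Set ℝ} (hs : MeasurableSet s) (f : Lp ℂ 2 (volume.restrict s)) :
    WConv (fun n : ℕ => modulate n f) 0 := by
  intro φ
  have hRL := (Real.tendsto_integral_exp_smul_cocompact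
    (s.indicator fun x => starRingEnd ℂ (f x) * φ x)).comp
    (tendsto_natCast_atTop_atTop.mono_right atTop_le_cocompact)
  rw [inner_zero_left]
  refine hRL.congr fun n => ?_
  rw [Function.comp_apply, ← Set.indicator_smul, integral_indicator hs, L2.inner_def]
  refine integral_congr_ae ?_
  filter_upwards [coeFn_modulate (n : ℝ) f] with x hx
  rw [hx, RCLike.inner_apply, map_mul, ← Circle.coe_inv_eq_conj, ← AddChar.map_neg_eq_inv,
    Circle.smul_def, mul_comm x]
  ring

def autoconv (k : ℝ × ℝ → ℂ) (f : ℝ → ℂ) (s : ℝ) : ℂ :=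
  ∫ τ in (max (s - 1) 0)..(min s 1), k (s, τ) * f (s - τ) * f τ

section Autoconv

variable {k : ℝ × ℝ → ℂ} {s : ℝ}

lemma max_sub_one_zero_le_min (hs : s ∈ Icc (0 : ℝ) 2) : max (s - 1) 0 ≤ min s 1 :=
  max_le (le_min (by linarith) (by linarith [hs.2])) (le_min hs.1 zero_le_one)

-- On the range of integration both `τ` and `s - τ` lie in `Icc 0 1`, and `Ioo 0 1 =ᵐ Icc 0 1`.
lemma autoconv_congr_ae {f₁ f₂ : ℝ → ℂ} (h : f₁ =ᵐ[μ1] f₂) (hs : s ∈ Icc (0 : ℝ) 2) :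
    autoconv k f₁ s = autoconv k f₂ s := by
  rw [μ1, Measure.restrict_congr_set Ioo_ae_eq_Icc, EventuallyEq,
    ae_restrict_iff' measurableSet_Icc] at h
  have h' : ∀ᵐ τ, s - τ ∈ Icc (0 : ℝ) 1 → f₁ (s - τ) = f₂ (s - τ) :=
    (Measure.measurePreserving_sub_left volume s).quasiMeasurePreserving.ae h
  refine intervalIntegral.integral_congr_ae ?_
  filter_upwards [h, h'] with τ hτ hsτ hmem
  rw [uIoc_of_le (max_sub_one_zero_le_min hs), mem_Ioc, max_lt_iff, le_min_iff] at hmem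
  obtain ⟨⟨hl, hl'⟩, hu, hu'⟩ := hmem
  rw [hτ ⟨by linarith, by linarith⟩, hsτ ⟨by linarith, by linarith⟩]

lemma autoconv_fourierChar_mul (t : ℝ) (f : ℝ → ℂ) (s : ℝ) :
    autoconv k (fun x => (𝐞 (t * x) : ℂ) * f x) s = 𝐞 (t * s) * autoconv k f s := by
  rw [autoconv, autoconv, ← intervalIntegral.integral_const_mul]
  congr 1 with τ
  have : (𝐞 (t * s) : ℂ) = 𝐞 (t * (s - τ)) * 𝐞 (t * τ) := by
    rw [← Circle.coe_mul, ← AddChar.map_add_eq_mul]; ring_nf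
  rw [this]; ring

lemma autoconv_indicator_one {S : Set ℝ} (hS : MeasurableSet S) (hS01 : S ⊆ Ioo 0 1)
    (hs : s ∈ Icc (0 : ℝ) 2) :
    autoconv k (S.indicator fun _ => 1) s = ∫ τ in {τ | τ ∈ S ∧ s - τ ∈ S}, k (s, τ) := by
  have hA : MeasurableSet {τ | τ ∈ S ∧ s - τ ∈ S} :=
    hS.inter (hS.preimage (measurable_const.sub measurable_id))
  have hsub : {τ | τ ∈ S ∧ s - τ ∈ S} ⊆ Ioc (max (s - 1) 0) (min s 1) := by
    rintro τ ⟨hτ, hsτ⟩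
    obtain ⟨h1, h2⟩ := hS01 hτ
    obtain ⟨h3, h4⟩ := hS01 hsτ
    exact ⟨max_lt (by linarith) h1, le_min (by linarith) h2.le⟩
  rw [autoconv, intervalIntegral.integral_of_le (max_sub_one_zero_le_min hs),
    ← inter_eq_self_of_subset_right hsub, ← setIntegral_indicator hA]
  congr 1 with τ
  by_cases hτ : τ ∈ S <;> by_cases hsτ : s - τ ∈ S <;> simp [hτ, hsτ]

end Autoconv

def IsAutoconvOp (k : ℝ × ℝ → ℂ) (F : X → Y) : Prop :=
  ∀ f : X, ∀ᵐ s ∂μ2, F f s = autoconv k f s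

lemma ae_mem_Icc_zero_two : ∀ᵐ s ∂μ2, s ∈ Icc (0 : ℝ) 2 :=
  (ae_restrict_mem measurableSet_Ioo).mono fun _ hs => Ioo_subset_Icc_self hs

namespace IsAutoconvOp

variable {k : ℝ × ℝ → ℂ} {F : X → Y}

lemma map_zero (hF : IsAutoconvOp k F) : F 0 = 0 := by
  rw [Lp.eq_zero_iff_ae_eq_zero]
  filter_upwards [hF 0, ae_mem_Icc_zero_two] with s hs hsI
  rw [hs, autoconv_congr_ae (Lp.coeFn_zero ℂ 2 μ1) hsI]
  simp [autoconv]

lemma norm_map_modulate (hF : IsAutoconvOp k F) (t : ℝ) (f : X) :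
    ‖F (modulate t f)‖ = ‖F f‖ :=
  Lp.norm_eq_of_ae_norm_eq <| by
    filter_upwards [hF (modulate t f), hF f, ae_mem_Icc_zero_two] with s hs hfs hsI
    rw [hs, hfs, autoconv_congr_ae (coeFn_modulate t f) hsI, autoconv_fourierChar_mul, norm_mul,
      Circle.norm_coe, one_mul]

lemma map_ne_zero (hF : IsAutoconvOp k F) {f : X} (hf : ∃ᵐ s ∂μ2, autoconv k f s ≠ 0) :
    F f ≠ 0 := by
  intro h0
  refine hf ?_
  filter_upwards [hF f, Lp.coeFn_zero ℂ 2 μ2] with s hs hs0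
  rw [← hs, h0, hs0, Pi.zero_apply, not_not]

end IsAutoconvOp

lemma sub_mul_measureReal_le_norm_setIntegral {α E : Type*} [MeasurableSpace α]
    [NormedAddCommGroup E] [NormedSpace ℝ E] [CompleteSpace E] {μ : Measure α} {A : Set α}
    (hA : MeasurableSet A) (hμA : μ A ≠ ∞) {f : α → E}
    (hf : AEStronglyMeasurable f (μ.restrict A)) {c : E} {ε : ℝ}
    (hfc : ∀ x ∈ A, ‖f x - c‖ ≤ ε) :
    (‖c‖ - ε) * μ.real A ≤ ‖∫ x in A, f x ∂μ‖ := by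
  have : IsFiniteMeasure (μ.restrict A) := isFiniteMeasure_restrict.2 hμA
  have hint : IntegrableOn f A μ :=
    Integrable.of_bound hf (‖c‖ + ε) <| (ae_restrict_mem hA).mono fun x hx => by
      linarith [norm_le_norm_add_norm_sub' (f x) c, hfc x hx]
  have hdev : ‖∫ x in A, f x ∂μ - μ.real A • c‖ ≤ ε * μ.real A := by
    rw [← setIntegral_const, ← integral_sub hint (integrableOn_const hμA)]
    exact norm_setIntegral_le_of_norm_le_const hμA.lt_top hfc
  have := norm_sub_norm_le (μ.real A • c) (∫ x in A, f x ∂μ)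
  rw [norm_sub_rev, norm_smul, Real.norm_of_nonneg measureReal_nonneg] at this
  linarith

lemma mk_mem_Par {s τ : ℝ} (hτ : τ ∈ Ioo (0 : ℝ) 1) (hsτ : s - τ ∈ Ioo (0 : ℝ) 1) :
    (s, τ) ∈ Par :=
  ⟨hτ.1.le, hτ.2.le, by linarith [hsτ.1], by linarith [hsτ.2]⟩

lemma autoconv_indicator_one_ne_zero {k : ℝ × ℝ → ℂ} {S : Set ℝ} {s : ℝ} {c : ℂ}
    (hk : ContinuousOn k Par) (hS : MeasurableSet S) (hS01 : S ⊆ Ioo 0 1)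
    (hs : s ∈ Icc (0 : ℝ) 2) (hc : c ≠ 0)
    (hkc : ∀ τ ∈ S, s - τ ∈ S → ‖k (s, τ) - c‖ ≤ ‖c‖ / 2)
    (hA : 0 < volume {τ | τ ∈ S ∧ s - τ ∈ S}) :
    autoconv k (S.indicator fun _ => 1) s ≠ 0 := by
  set A := {τ | τ ∈ S ∧ s - τ ∈ S}
  have hAmeas : MeasurableSet A := hS.inter (hS.preimage (measurable_const.sub measurable_id))
  have hAfin : volume A ≠ ∞ :=
    ((measure_mono fun τ hτ => hS01 hτ.1).trans_lt measure_Ioo_lt_top).ne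
  have hkA : ContinuousOn (fun τ => k (s, τ)) A :=
    hk.comp (Continuous.continuousOn (by fun_prop)) fun _ hτ =>
      mk_mem_Par (hS01 hτ.1) (hS01 hτ.2)
  have hlow := sub_mul_measureReal_le_norm_setIntegral hAmeas hAfin
    (hkA.aestronglyMeasurable hAmeas) fun τ hτ => hkc τ hτ.1 hτ.2
  have hpos : 0 < (‖c‖ - ‖c‖ / 2) * volume.real A := by
    have := ENNReal.toReal_pos hA.ne' hAfin
    have := norm_pos_iff.2 hc
    rw [measureReal_def]
    nlinarith
  rw [autoconv_indicator_one hS hS01 hs]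
  intro h0
  rw [h0, norm_zero] at hlow
  linarith

lemma exists_Icc_mem_subset_Icc_zero_one {a ρ : ℝ} (ha : a ∈ Icc (0 : ℝ) 1) (hρ : 0 ≤ ρ)
    (hρ1 : ρ ≤ 1) : ∃ α, a ∈ Icc α (α + ρ) ∧ 0 ≤ α ∧ α + ρ ≤ 1 :=
  ⟨min a (1 - ρ), ⟨min_le_left _ _,
    by linarith [le_min (by linarith : a - ρ ≤ a) (by linarith [ha.2] : a - ρ ≤ 1 - ρ)]⟩,
    le_min ha.1 (by linarith), by linarith [min_le_right a (1 - ρ)]⟩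

lemma exists_frequently_autoconv_indicator_one_ne_zero_of_near {k : ℝ × ℝ → ℂ} {a b δ : ℝ} {c : ℂ}
    (hk : ContinuousOn k Par) (ha : a ∈ Icc (0 : ℝ) 1) (hb : b ∈ Icc (0 : ℝ) 1) (hδ : 0 < δ)
    (hc : c ≠ 0)
    (hnear : ∀ s τ, (s, τ) ∈ Par → |s - (a + b)| < δ → (|τ - a| < δ ∨ |τ - b| < δ) →
      ‖k (s, τ) - c‖ ≤ ‖c‖ / 2) :
    ∃ S, MeasurableSet S ∧ S ⊆ Ioo 0 1 ∧
      ∃ᵐ s ∂μ2, autoconv k (S.indicator fun _ => 1) s ≠ 0 := by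
  set ρ := min (δ / 3) 1
  have hρ : 0 < ρ := lt_min (by positivity) one_pos
  have hρδ : ρ ≤ δ / 3 := min_le_left _ _
  obtain ⟨α, ⟨hαa, haα⟩, hα0, hα1⟩ :=
    exists_Icc_mem_subset_Icc_zero_one ha hρ.le (min_le_right _ _)
  obtain ⟨β, ⟨hβb, hbβ⟩, hβ0, hβ1⟩ :=
    exists_Icc_mem_subset_Icc_zero_one hb hρ.le (min_le_right _ _)
  set S := Ioo α (α + ρ) ∪ Ioo β (β + ρ)
  have hS01 : S ⊆ Ioo 0 1 := by
    rintro τ (⟨h1, h2⟩ | ⟨h1, h2⟩) <;> constructor <;> linarith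
  set J := Ioo (α + β) (α + β + ρ)
  have hJ : J ⊆ {s | autoconv k (S.indicator fun _ => 1) s ≠ 0} ∩ Ioo 0 2 := by
    rintro s ⟨hs1, hs2⟩
    have hkc : ∀ τ ∈ S, s - τ ∈ S → ‖k (s, τ) - c‖ ≤ ‖c‖ / 2 := by
      intro τ hτ hsτ
      refine hnear s τ (mk_mem_Par (hS01 hτ) (hS01 hsτ))
        (abs_lt.2 ⟨by linarith, by linarith⟩) ?_
      rcases hτ with ⟨h1, h2⟩ | ⟨h1, h2⟩
      · exact Or.inl (abs_lt.2 ⟨by linarith, by linarith⟩)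
      · exact Or.inr (abs_lt.2 ⟨by linarith, by linarith⟩)
    have hA : Ioo α (s - β) ⊆ {τ | τ ∈ S ∧ s - τ ∈ S} := fun τ ⟨h1, h2⟩ =>
      ⟨Or.inl ⟨h1, by linarith⟩, Or.inr ⟨by linarith, by linarith⟩⟩
    refine ⟨autoconv_indicator_one_ne_zero hk (measurableSet_Ioo.union measurableSet_Ioo) hS01
      ⟨by linarith, by linarith⟩ hc hkc ?_, by linarith, by linarith⟩
    exact (Real.volume_Ioo ▸ ENNReal.ofReal_pos.2 (by linarith)).trans_le (measure_mono hA)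
  refine ⟨S, measurableSet_Ioo.union measurableSet_Ioo, hS01, frequently_ae_iff.2 ?_⟩
  rw [Measure.restrict_apply' measurableSet_Ioo]
  exact ((Real.volume_Ioo ▸ ENNReal.ofReal_pos.2 (by linarith)).trans_le (measure_mono hJ)).ne'

lemma exists_frequently_autoconv_indicator_one_ne_zero {k : ℝ × ℝ → ℂ}
    (hk_cont : ContinuousOn k Par) (hk_symm : ∀ p ∈ Par, k p = k (p.1, p.1 - p.2))
    (hk_ne : ∃ p ∈ Par, k p ≠ 0) :
    ∃ S, MeasurableSet S ∧ S ⊆ Ioo 0 1 ∧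
      ∃ᵐ s ∂μ2, autoconv k (S.indicator fun _ => 1) s ≠ 0 := by
  obtain ⟨⟨s₀, a⟩, hpa, hc⟩ := hk_ne
  obtain ⟨ha0, ha1, has, hsa⟩ := id hpa
  have hpb : (s₀, s₀ - a) ∈ Par := ⟨by linarith, by linarith, by linarith, by linarith⟩
  have hkb : k (s₀, s₀ - a) = k (s₀, a) := (hk_symm _ hpa).symm
  have hc2 : 0 < ‖k (s₀, a)‖ / 2 := half_pos (norm_pos_iff.2 hc)
  obtain ⟨δa, hδa, hka_near⟩ := Metric.continuousWithinAt_iff.1 (hk_cont _ hpa) _ hc2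
  obtain ⟨δb, hδb, hkb_near⟩ := Metric.continuousWithinAt_iff.1 (hk_cont _ hpb) _ hc2
  rw [hkb] at hkb_near
  refine exists_frequently_autoconv_indicator_one_ne_zero_of_near hk_cont ⟨ha0, ha1⟩ (b := s₀ - a)
    ⟨by linarith, by linarith⟩ (lt_min hδa hδb) hc fun s τ hsτ hs hτ => ?_
  rw [add_sub_cancel] at hs
  rw [← dist_eq_norm]
  rcases hτ with hτ | hτ
  · refine (hka_near hsτ ?_).le
    rw [Prod.dist_eq, Real.dist_eq, Real.dist_eq]
    exact max_lt (hs.trans_le (min_le_left _ _)) (hτ.trans_le (min_le_left _ _))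
  · refine (hkb_near hsτ ?_).le
    rw [Prod.dist_eq, Real.dist_eq, Real.dist_eq]
    exact max_lt (hs.trans_le (min_le_right _ _)) (hτ.trans_le (min_le_right _ _))

lemma IsAutoconvOp.exists_norm_le_one_map_ne_zero {k : ℝ × ℝ → ℂ} {F : X → Y}
    (hF : IsAutoconvOp k F) (hk_cont : ContinuousOn k Par)
    (hk_symm : ∀ p ∈ Par, k p = k (p.1, p.1 - p.2)) (hk_ne : ∃ p ∈ Par, k p ≠ 0) :
    ∃ f : X, ‖f‖ ≤ 1 ∧ F f ≠ 0 := by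
  obtain ⟨S, hS, hS01, hfreq⟩ :=
    exists_frequently_autoconv_indicator_one_ne_zero hk_cont hk_symm hk_ne
  have hμS : μ1.real S ≤ 1 := (measureReal_mono (subset_univ S)).trans (by simp)
  refine ⟨indicatorConstLp 2 hS (measure_ne_top μ1 S) (1 : ℂ), ?_, hF.map_ne_zero ?_⟩
  · refine norm_indicatorConstLp_le.trans ?_
    rw [norm_one, one_mul]
    exact Real.rpow_le_one measureReal_nonneg hμS (by norm_num)
  · refine hfreq.mp (ae_mem_Icc_zero_two.mono fun s hs hne => ?_)
    rwa [autoconv_congr_ae indicatorConstLp_coeFn hs]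

theorem stmt7_general (k : ℝ × ℝ → ℂ) (hk_cont : ContinuousOn k Par)
    (hk_symm : ∀ p ∈ Par, k p = k (p.1, p.1 - p.2))
    (hk_ne : ∃ p ∈ Par, k p ≠ 0)
    (F : X → Y)
    (hF : ∀ f : X, ∀ᵐ s ∂μ2,
      F f s = ∫ τ in (max (s - 1) 0)..(min s 1), k (s, τ) * f (s - τ) * f τ) :
    ∃ h : ℕ → X,
      (∀ n, ‖h n‖ ≤ 1) ∧
      WConv h 0 ∧
      ¬ Tendsto (fun n => ‖h n‖) atTop (𝓝 0) ∧
      (∀ φ : ℕ → ℕ, StrictMono φ → ¬ Tendsto (fun n => F (h (φ n))) atTop (𝓝 0)) ∧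
      0 < atTop.liminf (fun n => ‖F (h n)‖) := by
  have hF : IsAutoconvOp k F := hF
  obtain ⟨f, hf_le, hFf⟩ := hF.exists_norm_le_one_map_ne_zero hk_cont hk_symm hk_ne
  have hf : f ≠ 0 := by rintro rfl; exact hFf hF.map_zero
  refine ⟨fun n => modulate n f, fun n => (norm_modulate _ f).trans_le hf_le,
    wConv_modulate measurableSet_Ioo f, ?_, fun φ _ hφ => ?_, ?_⟩
  · simp only [norm_modulate, tendsto_const_nhds_iff, norm_eq_zero]
    exact hf
  · have := hφ.norm
    simp only [hF.norm_map_modulate, norm_zero, tendsto_const_nhds_iff, norm_eq_zero] at this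
    exact hFf this
  · simp only [hF.norm_map_modulate, liminf_const]
    exact norm_pos_iff.2 hFf

/-- If the kernel `k` is not identically zero on `𝔓`, then the autoconvolution
operator `F : X → Y` is not compact: there is a sequence `{h_n}` in the closed unit ball of
`X` with `h_n ⇀ 0` weakly, `‖h_n‖` not converging to `0`, no subsequence of `{F(h_n)}`
converging in norm to `0`, and indeed `liminf ‖F(h_n)‖ > 0`. -/
theorem stmt7 (k : ℝ × ℝ → ℂ) (hk_cont : ContinuousOn k Par)
    (hk_supp : ∀ p, p ∉ Par → k p = 0)
    (hk_symm : ∀ p ∈ Par, k p = k (p.1, p.1 - p.2))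
    (hk_ne : ∃ p ∈ Par, k p ≠ 0)
    (F : X → Y)
    (hF : ∀ f : X, ∀ᵐ s ∂μ2,
      F f s = ∫ τ in (max (s - 1) 0)..(min s 1), k (s, τ) * f (s - τ) * f τ) :
    ∃ h : ℕ → X,
      (∀ n, ‖h n‖ ≤ 1) ∧
      WConv h 0 ∧
      ¬ Tendsto (fun n => ‖h n‖) atTop (𝓝 0) ∧
      (∀ φ : ℕ → ℕ, StrictMono φ → ¬ Tendsto (fun n => F (h (φ n))) atTop (𝓝 0)) ∧
      0 < atTop.liminf (fun n => ‖F (h n)‖) :=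
  stmt7_general k hk_cont hk_symm hk_ne F hF
end
end

section
/- Let the kernel k on 𝔓 be generated by a function κ ∈ C[0,1] with supp(κ) = [0,1] (equivalently, κ ≠ 0 almost everywhere on [0,1]) via k(s,τ) = κ(τ)κ(s−τ) for (s,τ) ∈ 𝔓 and k(s,τ) = 0 otherwise. If for given g ∈ Y the function f† ∈ X solves F(f) = g, then f† and −f† are the only solutions of this equation in X for the right-hand side g. -/
open MeasureTheory Complex Set Filter Topology
open scoped ENNReal

noncomputable section

/-!
With `u = κ f` on `(0,1)`, extended by zero, the factorized kernel turns `F f` into the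
autoconvolution `u ⋆ u`, so two solutions give `u ⋆ u = v ⋆ v`. The `n`-th moment of `u ⋆ u` is
the binomial self-convolution of the moments of `u`; hence the exponential generating functions
of the moment sequences satisfy `A_u ^ 2 = A_v ^ 2` in the integral domain of formal power
series, and `A_u = ± A_v`. By Weierstrass approximation a compactly supported integrable
function is determined by its moments, so `u = ± v` a.e., and `κ ≠ 0` a.e. lets us cancel `κ`.
-/

open Function
open scoped Nat Convolution

theorem MeasureTheory.Integrable.continuous_mul_of_support_subset_Icc {a b : ℝ} {u : ℝ → ℂ}
    (hu : Integrable u) (hsupp : support u ⊆ Icc a b) {c : ℝ → ℂ} (hc : Continuous c) :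
    Integrable fun t => c t * u t := by
  rw [← integrableOn_iff_integrable_of_support_subset ((support_mul_subset_right c u).trans hsupp)]
  exact hu.integrableOn.continuousOn_mul hc.continuousOn isCompact_Icc

theorem MeasureTheory.Integrable.pow_mul_of_support_subset_Icc {a b : ℝ} {u : ℝ → ℂ}
    (hu : Integrable u) (hsupp : support u ⊆ Icc a b) (n : ℕ) :
    Integrable fun t : ℝ => (t : ℂ) ^ n * u t :=
  hu.continuous_mul_of_support_subset_Icc hsupp (continuous_ofReal.pow n)

theorem MeasureTheory.ae_eq_of_ae_restrict_eq_of_support_subset {α β : Type*}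
    [MeasurableSpace α] [Zero β] {μ : Measure α} {s : Set α} (hs : MeasurableSet s)
    {f g : α → β} (hf : support f ⊆ s) (hg : support g ⊆ s) (h : f =ᵐ[μ.restrict s] g) :
    f =ᵐ[μ] g :=
  ae_of_ae_restrict_of_ae_restrict_compl s h <| ae_restrict_of_forall_mem hs.compl fun x hx => by
    rw [notMem_support.mp fun h => hx (hf h), notMem_support.mp fun h => hx (hg h)]

theorem integral_pow_mul_convolution {f g : ℝ → ℂ} (n : ℕ)
    (hf : ∀ k ≤ n, Integrable fun t : ℝ => (t : ℂ) ^ k * f t)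
    (hg : ∀ k ≤ n, Integrable fun t : ℝ => (t : ℂ) ^ k * g t) :
    ∫ s : ℝ, (s : ℂ) ^ n * (f ⋆[ContinuousLinearMap.mul ℂ ℂ] g) s =
      ∑ k ∈ Finset.range (n + 1), (n.choose k : ℂ) * (∫ t : ℝ, (t : ℂ) ^ k * f t) *
        ∫ t : ℝ, (t : ℂ) ^ (n - k) * g t := by
  set L := ContinuousLinearMap.mul ℂ ℂ
  have hk : ∀ k ∈ Finset.range (n + 1), k ≤ n ∧ n - k ≤ n := fun k hk =>
    ⟨Finset.mem_range_succ_iff.mp hk, Nat.sub_le n k⟩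
  -- `s ^ n = (τ + (s - τ)) ^ n`, expanded by the binomial theorem inside the convolution integral
  have hbinomial : ∀ᵐ s : ℝ, (s : ℂ) ^ n * (f ⋆[L] g) s = ∑ k ∈ Finset.range (n + 1),
      (n.choose k : ℂ) *
        ((fun t : ℝ => (t : ℂ) ^ k * f t) ⋆[L] fun t : ℝ => (t : ℂ) ^ (n - k) * g t) s := by
    have hexists := (eventually_all_finset (Finset.range (n + 1))).2 fun k hk' =>
      (hf k (hk k hk').1).ae_convolution_exists L (hg (n - k) (hk k hk').2)
    filter_upwards [hexists] with s hs
    simp only [convolution_def, ← integral_const_mul]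
    rw [← integral_finsetSum _ fun k hk' => (hs k hk').const_mul _]
    refine integral_congr_ae (.of_forall fun τ => ?_)
    have hs : (s : ℂ) = τ + (s - τ : ℝ) := by push_cast; ring
    simp only [L, ContinuousLinearMap.mul_apply', hs, add_pow, Finset.sum_mul]
    exact Finset.sum_congr rfl fun k _ => by ring
  rw [integral_congr_ae hbinomial, integral_finsetSum _ fun k hk' =>
    ((hf k (hk k hk').1).integrable_convolution L (hg (n - k) (hk k hk').2)).const_mul _]
  refine Finset.sum_congr rfl fun k hk' => ?_
  rw [integral_const_mul, integral_convolution L (hf k (hk k hk').1) (hg (n - k) (hk k hk').2),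
    mul_assoc]
  rfl

theorem PowerSeries.coeff_mk_div_factorial_mul {K : Type*} [Field K] [CharZero K] (a b : ℕ → K)
    (n : ℕ) :
    coeff n (mk (fun k => a k / k !) * mk fun k => b k / (k ! : K)) =
      (n ! : K)⁻¹ * ∑ k ∈ Finset.range (n + 1), (n.choose k : K) * a k * b (n - k) := by
  rw [coeff_mul, Finset.Nat.sum_antidiagonal_eq_sum_range_succ_mk, Finset.mul_sum]
  refine Finset.sum_congr rfl fun k hk => ?_
  have : (n ! : K) ≠ 0 := Nat.cast_ne_zero.mpr n.factorial_ne_zero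
  rw [coeff_mk, coeff_mk, Nat.cast_choose K (Finset.mem_range_succ_iff.mp hk)]
  field_simp

theorem eq_or_eq_neg_of_sum_choose_mul_self_eq {K : Type*} [Field K] [CharZero K]
    {a b : ℕ → K}
    (h : ∀ n, ∑ k ∈ Finset.range (n + 1), (n.choose k : K) * a k * a (n - k) =
      ∑ k ∈ Finset.range (n + 1), (n.choose k : K) * b k * b (n - k)) :
    a = b ∨ a = -b := by
  set A := PowerSeries.mk fun k => a k / (k ! : K)
  set B := PowerSeries.mk fun k => b k / (k ! : K)
  have hAB : A * A = B * B := by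
    ext n
    rw [PowerSeries.coeff_mk_div_factorial_mul, PowerSeries.coeff_mk_div_factorial_mul, h]
  rcases mul_eq_zero.mp (by linear_combination hAB : (A - B) * (A + B) = 0) with hAB | hAB
  · refine .inl (funext fun n => ?_)
    simpa [A, B, sub_eq_zero, Nat.factorial_ne_zero] using congrArg (PowerSeries.coeff n) hAB
  · refine .inr (funext fun n => ?_)
    simpa [A, B, ← add_div, add_eq_zero_iff_eq_neg, Nat.factorial_ne_zero] using
      congrArg (PowerSeries.coeff n) hAB

section Moments

open Polynomial

variable {a b : ℝ} {w : ℝ → ℂ}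

theorem integral_eval_mul_eq_zero_of_integral_pow_mul_eq_zero (hw : Integrable w)
    (hsupp : support w ⊆ Icc a b) (hmoment : ∀ n : ℕ, ∫ t : ℝ, (t : ℂ) ^ n * w t = 0)
    (p : ℝ[X]) : ∫ t : ℝ, ((p.eval t : ℝ) : ℂ) * w t = 0 := by
  induction p using Polynomial.induction_on' with
  | add p q hp hq =>
    have hint (r : ℝ[X]) : Integrable fun t : ℝ => ((r.eval t : ℝ) : ℂ) * w t :=
      hw.continuous_mul_of_support_subset_Icc hsupp (continuous_ofReal.comp r.continuous)
    simp only [eval_add, ofReal_add, add_mul]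
    rw [integral_add (hint p) (hint q), hp, hq, add_zero]
  | monomial n r =>
    simp only [eval_monomial, ofReal_mul, ofReal_pow, mul_assoc]
    rw [integral_const_mul, hmoment n, mul_zero]

theorem integral_smul_eq_zero_of_integral_pow_mul_eq_zero (hw : Integrable w)
    (hsupp : support w ⊆ Icc a b) (hmoment : ∀ n : ℕ, ∫ t : ℝ, (t : ℂ) ^ n * w t = 0)
    {g : ℝ → ℝ} (hg : Continuous g) : ∫ t, g t • w t = 0 := by
  refine norm_le_zero_iff.mp (le_of_forall_pos_le_add fun ε hε => ?_)
  set M := ∫ t, ‖w t‖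
  have hM : 0 ≤ M := integral_nonneg fun t => norm_nonneg _
  obtain ⟨p, hp⟩ := exists_polynomial_near_of_continuousOn a b g hg.continuousOn
    (ε / (M + 1)) (by positivity)
  have hdiff : ∫ t, g t • w t = ∫ t, ((g t - p.eval t : ℝ) : ℂ) * w t := by
    have hgw : Integrable fun t : ℝ => (g t : ℂ) * w t :=
      hw.continuous_mul_of_support_subset_Icc hsupp (continuous_ofReal.comp hg)
    have hpw : Integrable fun t : ℝ => ((p.eval t : ℝ) : ℂ) * w t :=
      hw.continuous_mul_of_support_subset_Icc hsupp (continuous_ofReal.comp p.continuous)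
    simp only [ofReal_sub, sub_mul, Complex.real_smul]
    rw [integral_sub hgw hpw,
      integral_eval_mul_eq_zero_of_integral_pow_mul_eq_zero hw hsupp hmoment p, sub_zero]
  have hbound (t : ℝ) : ‖((g t - p.eval t : ℝ) : ℂ) * w t‖ ≤ ε / (M + 1) * ‖w t‖ := by
    by_cases ht : t ∈ Icc a b
    · rw [norm_mul, norm_real, Real.norm_eq_abs, abs_sub_comm]
      gcongr
      exact (hp t ht).le
    · simp [notMem_support.mp fun h => ht (hsupp h)]
  calc ‖∫ t, g t • w t‖ ≤ ∫ t, ε / (M + 1) * ‖w t‖ := by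
        rw [hdiff]
        exact norm_integral_le_of_norm_le (hw.norm.const_mul _) (.of_forall hbound)
    _ = ε / (M + 1) * M := integral_const_mul _ _
    _ ≤ 0 + ε := by
        rw [zero_add, div_mul_eq_mul_div, div_le_iff₀ (by positivity)]
        nlinarith

theorem ae_eq_zero_of_integral_pow_mul_eq_zero (hw : Integrable w)
    (hsupp : support w ⊆ Icc a b) (hmoment : ∀ n : ℕ, ∫ t : ℝ, (t : ℂ) ^ n * w t = 0) :
    w =ᵐ[volume] 0 :=
  ae_eq_zero_of_integral_contDiff_smul_eq_zero hw.locallyIntegrable fun _ hg _ =>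
    integral_smul_eq_zero_of_integral_pow_mul_eq_zero hw hsupp hmoment hg.continuous

theorem ae_eq_of_integral_pow_mul_eq {u v : ℝ → ℂ} (hu : Integrable u) (hv : Integrable v)
    (hu_supp : support u ⊆ Icc a b) (hv_supp : support v ⊆ Icc a b)
    (hmoment : ∀ n : ℕ, ∫ t : ℝ, (t : ℂ) ^ n * u t = ∫ t : ℝ, (t : ℂ) ^ n * v t) :
    u =ᵐ[volume] v := by
  refine (ae_eq_zero_of_integral_pow_mul_eq_zero (hu.sub hv)
    ((support_sub u v).trans (union_subset hu_supp hv_supp)) fun n => ?_).mono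
    fun t ht => sub_eq_zero.mp ht
  simp only [Pi.sub_apply, mul_sub]
  rw [integral_sub (hu.pow_mul_of_support_subset_Icc hu_supp n)
    (hv.pow_mul_of_support_subset_Icc hv_supp n), hmoment, sub_self]

theorem ae_eq_or_ae_eq_neg_of_convolution_self_ae_eq {u v : ℝ → ℂ}
    (hu : Integrable u) (hv : Integrable v) (hu_supp : support u ⊆ Icc a b)
    (hv_supp : support v ⊆ Icc a b)
    (h : u ⋆[ContinuousLinearMap.mul ℂ ℂ] u =ᵐ[volume] v ⋆[ContinuousLinearMap.mul ℂ ℂ] v) :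
    u =ᵐ[volume] v ∨ u =ᵐ[volume] -v := by
  have hu_moment := hu.pow_mul_of_support_subset_Icc hu_supp
  have hv_moment := hv.pow_mul_of_support_subset_Icc hv_supp
  have hsq (n : ℕ) := calc
    ∑ k ∈ Finset.range (n + 1), (n.choose k : ℂ) * (∫ t : ℝ, (t : ℂ) ^ k * u t) *
        ∫ t : ℝ, (t : ℂ) ^ (n - k) * u t
      = ∫ s : ℝ, (s : ℂ) ^ n * (u ⋆[ContinuousLinearMap.mul ℂ ℂ] u) s :=
        (integral_pow_mul_convolution n (fun k _ => hu_moment k) fun k _ => hu_moment k).symm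
    _ = ∫ s : ℝ, (s : ℂ) ^ n * (v ⋆[ContinuousLinearMap.mul ℂ ℂ] v) s :=
        integral_congr_ae (h.mono fun s hs => by simp only [hs])
    _ = ∑ k ∈ Finset.range (n + 1), (n.choose k : ℂ) * (∫ t : ℝ, (t : ℂ) ^ k * v t) *
        ∫ t : ℝ, (t : ℂ) ^ (n - k) * v t :=
        integral_pow_mul_convolution n (fun k _ => hv_moment k) fun k _ => hv_moment k
  rcases eq_or_eq_neg_of_sum_choose_mul_self_eq hsq with hm | hm
  · exact .inl (ae_eq_of_integral_pow_mul_eq hu hv hu_supp hv_supp (congrFun hm))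
  · refine .inr (ae_eq_of_integral_pow_mul_eq hu hv.neg hu_supp
      ((support_neg v).trans_subset hv_supp) fun n => ?_)
    simp only [Pi.neg_apply, mul_neg, integral_neg]
    exact congrFun hm n

end Moments

def weightedExtension (κ f : ℝ → ℂ) : ℝ → ℂ :=
  (Ioo (0 : ℝ) 1).indicator fun t => κ t * f t

section WeightedExtension

variable {κ : ℝ → ℂ}

theorem support_weightedExtension_subset (f : ℝ → ℂ) : support (weightedExtension κ f) ⊆ Icc 0 1 :=
  Set.support_indicator_subset.trans Ioo_subset_Icc_self

theorem support_convolution_weightedExtension_subset (f : ℝ → ℂ) :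
    support (weightedExtension κ f ⋆[ContinuousLinearMap.mul ℂ ℂ] weightedExtension κ f) ⊆
      Icc 0 2 :=
  (support_convolution_subset _).trans <|
    (add_subset_add (support_weightedExtension_subset f) (support_weightedExtension_subset f)).trans
      (by simpa [one_add_one_eq_two] using Icc_add_Icc_subset (0 : ℝ) 1 0 1)

theorem integrable_weightedExtension (hκ : ContinuousOn κ (Icc 0 1)) {f : ℝ → ℂ}
    (hf : IntegrableOn f (Ioo 0 1)) : Integrable (weightedExtension κ f) := by
  rw [weightedExtension, integrable_indicator_iff measurableSet_Ioo]
  exact hf.continuousOn_mul_of_subset hκ isCompact_Icc measurableSet_Ioo Ioo_subset_Icc_self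

theorem weightedExtension_congr_ae {f f' : ℝ → ℂ} (h : f =ᵐ[μ1] f') :
    weightedExtension κ f =ᵐ[volume] weightedExtension κ f' := by
  filter_upwards [(ae_restrict_iff' measurableSet_Ioo).mp h] with t ht
  by_cases ht' : t ∈ Ioo (0 : ℝ) 1
  · simp [weightedExtension, ht', ht ht']
  · simp [weightedExtension, ht']

theorem weightedExtension_neg_ae_eq (f : X) :
    weightedExtension κ ⇑(-f) =ᵐ[volume] -weightedExtension κ f := by
  refine (weightedExtension_congr_ae (Lp.coeFn_neg f)).trans (.of_forall fun t => ?_)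
  simp [weightedExtension, indicator_neg]

theorem ae_eq_of_weightedExtension_ae_eq (hκ : ∀ᵐ t ∂μ1, κ t ≠ 0) {f f' : ℝ → ℂ}
    (h : weightedExtension κ f =ᵐ[volume] weightedExtension κ f') : f =ᵐ[μ1] f' := by
  filter_upwards [ae_restrict_of_ae h, ae_restrict_mem measurableSet_Ioo, hκ] with t ht hmem hκt
  simpa [weightedExtension, hmem, hκt] using ht

theorem intervalIntegral_kernel_eq_convolution {k : ℝ × ℝ → ℂ}
    (hk : ∀ p ∈ Par, k p = κ p.2 * κ (p.1 - p.2)) (f : ℝ → ℂ) {s : ℝ} (hs : s ∈ Icc 0 2) :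
    ∫ τ in max (s - 1) 0..min s 1, k (s, τ) * f (s - τ) * f τ =
      (weightedExtension κ f ⋆[ContinuousLinearMap.mul ℂ ℂ] weightedExtension κ f) s := by
  have hle : max (s - 1) 0 ≤ min s 1 :=
    max_le (le_min (by linarith) (by linarith [hs.2])) (le_min hs.1 zero_le_one)
  have hmem (τ : ℝ) :
      τ ∈ Ioo (max (s - 1) 0) (min s 1) ↔ τ ∈ Ioo 0 1 ∧ s - τ ∈ Ioo 0 1 := by
    simp only [mem_Ioo, max_lt_iff, lt_min_iff]
    constructor <;> intro h <;> refine ⟨⟨?_, ?_⟩, ?_, ?_⟩ <;> linarith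
  rw [intervalIntegral.integral_of_le hle, integral_Ioc_eq_integral_Ioo,
    ← integral_indicator measurableSet_Ioo, convolution_def]
  congr 1
  funext τ
  by_cases hτ : τ ∈ Ioo (max (s - 1) 0) (min s 1)
  · obtain ⟨h₁, h₂⟩ := (hmem τ).mp hτ
    rw [indicator_of_mem hτ, hk (s, τ) ⟨h₁.1.le, h₁.2.le, by linarith [h₂.1], by linarith [h₂.2]⟩]
    simp only [weightedExtension, indicator_of_mem h₁, indicator_of_mem h₂,
      ContinuousLinearMap.mul_apply']
    ring
  · have hout := (hmem τ).not.mp hτ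
    rw [indicator_of_notMem hτ]
    simp only [weightedExtension, ContinuousLinearMap.mul_apply', indicator_apply]
    split_ifs <;> simp_all

end WeightedExtension

theorem stmt11_general (κ : ℝ → ℂ) (hκ_cont : ContinuousOn κ (Set.Icc (0:ℝ) 1))
    (hκ_supp : ∀ᵐ τ ∂μ1, κ τ ≠ 0)
    (k : ℝ × ℝ → ℂ)
    (hk_gen : ∀ p ∈ Par, k p = κ p.2 * κ (p.1 - p.2))
    (F : X → Y)
    (hF : ∀ f : X, ∀ᵐ s ∂μ2,
      F f s = ∫ τ in (max (s - 1) 0)..(min s 1), k (s, τ) * f (s - τ) * f τ)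
    (g : Y) (fdag : X) (hsol : F fdag = g) :
    F (-fdag) = g ∧ ∀ f : X, F f = g → f = fdag ∨ f = -fdag := by
  have hconv (f : X) : F f =ᵐ[μ2]
      weightedExtension κ f ⋆[ContinuousLinearMap.mul ℂ ℂ] weightedExtension κ f := by
    filter_upwards [hF f, ae_restrict_mem measurableSet_Ioo] with s hs hmem
    rw [hs, intervalIntegral_kernel_eq_convolution hk_gen f (Ioo_subset_Icc_self hmem)]
  have hneg := weightedExtension_neg_ae_eq (κ := κ) fdag
  refine ⟨hsol ▸ Lp.ext ((hconv _).trans ?_ |>.trans (hconv fdag).symm), fun f hf => ?_⟩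
  · rw [convolution_congr (ContinuousLinearMap.mul ℂ ℂ) hneg hneg]
    exact .of_forall fun s => by simp [convolution_def]
  have hsq : weightedExtension κ f ⋆[ContinuousLinearMap.mul ℂ ℂ] weightedExtension κ f =ᵐ[volume]
      weightedExtension κ fdag ⋆[ContinuousLinearMap.mul ℂ ℂ] weightedExtension κ fdag := by
    refine ae_eq_of_ae_restrict_eq_of_support_subset measurableSet_Icc
      (support_convolution_weightedExtension_subset f)
      (support_convolution_weightedExtension_subset fdag) ?_
    rw [← Measure.restrict_congr_set Ioo_ae_eq_Icc]
    exact (hconv f).symm.trans (hf.trans hsol.symm ▸ hconv fdag)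
  have hint (f : X) : Integrable (weightedExtension κ f) :=
    integrable_weightedExtension hκ_cont ((Lp.memLp f).integrable one_le_two)
  rcases ae_eq_or_ae_eq_neg_of_convolution_self_ae_eq (hint f) (hint fdag)
    (support_weightedExtension_subset f) (support_weightedExtension_subset fdag) hsq with h | h
  · exact .inl (Lp.ext (ae_eq_of_weightedExtension_ae_eq hκ_supp h))
  · exact .inr (Lp.ext (ae_eq_of_weightedExtension_ae_eq hκ_supp (h.trans hneg.symm)))

/-- Let the kernel `k` be generated by `κ ∈ C[0,1]` with `supp(κ) = [0,1]`
(i.e. `κ ≠ 0` a.e. on `[0,1]`) via `k(s,τ) = κ(τ)κ(s−τ)` on `𝔓`, `k = 0` otherwise.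
If `f† ∈ X` solves `F(f) = g` for given `g ∈ Y`, then `f†` and `−f†` are the only
solutions in `X` for the right-hand side `g`. -/
theorem stmt11 (κ : ℝ → ℂ) (hκ_cont : ContinuousOn κ (Set.Icc (0:ℝ) 1))
    (hκ_supp : ∀ᵐ τ ∂μ1, κ τ ≠ 0)
    (k : ℝ × ℝ → ℂ)
    (hk_gen : ∀ p ∈ Par, k p = κ p.2 * κ (p.1 - p.2))
    (hk_supp : ∀ p, p ∉ Par → k p = 0)
    (F : X → Y)
    (hF : ∀ f : X, ∀ᵐ s ∂μ2,
      F f s = ∫ τ in (max (s - 1) 0)..(min s 1), k (s, τ) * f (s - τ) * f τ)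
    (g : Y) (fdag : X) (hsol : F fdag = g) :
    F (-fdag) = g ∧ ∀ f : X, F f = g → f = fdag ∨ f = -fdag :=
  stmt11_general κ hκ_cont hκ_supp k hk_gen F hF g fdag hsol
end
end

section
/- For every ε > 0, the operator Sign_ε : L²_ℂ(0,2) → L²_ℂ(0,2), defined pointwise by [Sign_ε(g)](s) = g(s)/max(ε, |g(s)|), is Lipschitz continuous with Lipschitz constant 1/ε, i.e., ‖Sign_ε(g₁) − Sign_ε(g₂)‖_{L²} ≤ (1/ε)‖g₁ − g₂‖_{L²} for all g₁, g₂ ∈ L²_ℂ(0,2). -/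
open MeasureTheory Complex Set Filter Topology
open scoped ENNReal

noncomputable section

/-!
`ε • Sign_ε` is the radial retraction of `ℂ` onto the closed disc of radius `ε`, i.e. the metric
projection onto a closed convex set, and such a projection is nonexpansive. Hence `Sign_ε` is
pointwise `1/ε`-Lipschitz, and an a.e. pointwise bound between functions passes to their `L²` norms.
-/

section Retraction

open scoped RealInnerProductSpace

variable {E : Type*} [NormedAddCommGroup E] [InnerProductSpace ℝ E]

/-- The obtuse-angle inequality characterising the metric projection onto `K` already makes a map
into `K` nonexpansive. -/
theorem norm_sub_le_of_real_inner_sub_nonpos {K : Set E} {P : E → E} (hPK : ∀ x, P x ∈ K)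
    (hP : ∀ x, ∀ w ∈ K, ⟪x - P x, w - P x⟫ ≤ 0) (x y : E) :
    ‖P x - P y‖ ≤ ‖x - y‖ := by
  have hsq : ‖P x - P y‖ ^ 2 ≤ ⟪x - y, P x - P y⟫ := by
    have hx := hP x (P y) (hPK y)
    have hy := hP y (P x) (hPK x)
    have hsum : ⟪x - P x, P y - P x⟫ + ⟪y - P y, P x - P y⟫
        = ‖P x - P y‖ ^ 2 - ⟪x - y, P x - P y⟫ := by
      rw [← neg_sub (P x) (P y), inner_neg_right, neg_add_eq_sub, ← inner_sub_left,
        show y - P y - (x - P x) = (P x - P y) - (x - y) by abel, inner_sub_left,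
        real_inner_self_eq_norm_sq]
    linarith
  have hle : ‖P x - P y‖ ^ 2 ≤ ‖x - y‖ * ‖P x - P y‖ := hsq.trans (real_inner_le_norm _ _)
  nlinarith [norm_nonneg (P x - P y), norm_nonneg (x - y)]

/-- `x ↦ (ε / max ε ‖x‖) • x` is the metric projection onto the closed ball of radius `ε`. -/
theorem real_inner_sub_ballRetraction_nonpos {ε : ℝ} (hε : 0 < ε) (x w : E) (hw : ‖w‖ ≤ ε) :
    ⟪x - (ε / max ε ‖x‖) • x, w - (ε / max ε ‖x‖) • x⟫ ≤ 0 := by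
  rcases le_total ‖x‖ ε with hxε | hεx
  · simp [max_eq_left hxε, hε.ne']
  · have hx : 0 < ‖x‖ := hε.trans_le hεx
    rw [max_eq_right hεx, show x - (ε / ‖x‖) • x = (1 - ε / ‖x‖) • x by rw [sub_smul, one_smul],
      real_inner_smul_left, inner_sub_right, inner_smul_right,
      real_inner_self_eq_norm_sq]
    have hcoef : 0 ≤ 1 - ε / ‖x‖ := sub_nonneg.2 ((div_le_one hx).2 hεx)
    have hxw : ⟪x, w⟫ ≤ ‖x‖ * ε := (real_inner_le_norm x w).trans (by gcongr)
    have hinner : ⟪x, w⟫ - ε / ‖x‖ * ‖x‖ ^ 2 ≤ 0 := by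
      rw [pow_two, ← mul_assoc, div_mul_cancel₀ _ hx.ne']; linarith
    simpa using mul_nonpos_of_nonneg_of_nonpos hcoef hinner

theorem norm_inv_max_smul_sub_le {ε : ℝ} (hε : 0 < ε) (x y : E) :
    ‖(max ε ‖x‖)⁻¹ • x - (max ε ‖y‖)⁻¹ • y‖ ≤ ε⁻¹ * ‖x - y‖ := by
  set P : E → E := fun z ↦ (ε / max ε ‖z‖) • z
  have hPK : ∀ z, P z ∈ Metric.closedBall (0 : E) ε := by
    intro z
    rw [mem_closedBall_zero_iff, norm_smul, Real.norm_of_nonneg (by positivity), div_mul_eq_mul_div,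
      div_le_iff₀ (by positivity)]
    exact mul_le_mul_of_nonneg_left (le_max_right _ _) hε.le
  have hP := norm_sub_le_of_real_inner_sub_nonpos hPK
    (fun z w hw ↦ real_inner_sub_ballRetraction_nonpos hε z w (mem_closedBall_zero_iff.1 hw)) x y
  have hscale : ∀ z, (max ε ‖z‖)⁻¹ • z = ε⁻¹ • P z := fun z ↦ by
    simp only [P, smul_smul, div_eq_mul_inv, ← mul_assoc, inv_mul_cancel₀ hε.ne', one_mul]
  rw [hscale, hscale, ← smul_sub, norm_smul, Real.norm_of_nonneg (by positivity)]
  gcongr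

end Retraction

theorem Complex.norm_div_max_sub_le {ε : ℝ} (hε : 0 < ε) (a b : ℂ) :
    ‖a / ((max ε ‖a‖ : ℝ) : ℂ) - b / ((max ε ‖b‖ : ℝ) : ℂ)‖ ≤ ε⁻¹ * ‖a - b‖ := by
  simpa only [real_smul, ofReal_inv, div_eq_inv_mul] using
    norm_inv_max_smul_sub_le hε a b

/-- For every `ε > 0`, the operator `Sign_ε` on `L²_ℂ(0,2)`, defined
pointwise by `[Sign_ε(g)](s) = g(s)/max(ε,|g(s)|)`, is Lipschitz continuous with constant
`1/ε`. -/
theorem stmt14 (ε : ℝ) (hε : 0 < ε)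
    (Sε : Y → Y)
    (hS : ∀ g : Y, ∀ᵐ s ∂μ2,
      Sε g s = g s / ((max ε ‖g s‖ : ℝ) : ℂ)) :
    ∀ g₁ g₂ : Y, ‖Sε g₁ - Sε g₂‖ ≤ (1 / ε) * ‖g₁ - g₂‖ := by
  intro g₁ g₂
  refine Lp.norm_le_mul_norm_of_ae_le_mul ?_
  filter_upwards [hS g₁, hS g₂, Lp.coeFn_sub (Sε g₁) (Sε g₂), Lp.coeFn_sub g₁ g₂]
    with s h₁ h₂ hS₁₂ hg₁₂
  rw [hS₁₂, hg₁₂, Pi.sub_apply, Pi.sub_apply, h₁, h₂, one_div]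
  exact Complex.norm_div_max_sub_le hε (g₁ s) (g₂ s)
end
end
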